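/- Consider the case N − M = 1, so b ∈ ℝᴺ, and write ā = bᵀa for a ∈ ℝᴺ. Given q_d⁰, q̇_d⁰, q⁰, q̇⁰ ∈ ℝᴺ with q̄̇⁰ = bᵀq̇⁰ ≠ 0, define t₀ = (q̄_d⁰ − q̄⁰)/q̄̇⁰ and s = q̄̇_d⁰/q̄̇⁰, and the renormalized target trajectory q_d^r(t) = q_d⁰ + (q̇_d⁰/s)(t − t₀) (assuming also q̄̇_d⁰ ≠ 0 so s ≠ 0). Then bᵀ q_d^r(t) = bᵀ(q⁰ + t q̇⁰) for all t; i.e. the reachability conditions bᵀ(q_d^r(0) − q⁰) + t·bᵀ(q̇_d^r(0) − q̇⁰) = 0 hold identically in t. -/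

import Mathlib

open Matrix

/-- The line `a + τ * d` reparametrized by `τ = (t - t₀) / s` passes through `c` at `t = 0`
with velocity `p`, once `t₀ = (a - c) / p` and `s = d / p`. -/
theorem reparam_line_eq {K : Type*} [Field K] {a c p d : K} (hp : p ≠ 0) (hd : d ≠ 0)
    (t : K) : a + (t - (a - c) / p) / (d / p) * d = c + t * p := by
  rw [div_div_eq_mul_div, div_mul_cancel₀ _ hd, sub_mul, div_mul_cancel₀ _ hp]
  ring

/-- One degree of underactuation. With `t₀ = (q̄_d⁰ − q̄⁰)/q̄̇⁰`,
`s = q̄̇_d⁰/q̄̇⁰`, and renormalized target `q_d^r(t) = q_d⁰ + (q̇_d⁰/s)(t − t₀)`,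
one has `bᵀ q_d^r(t) = bᵀ (q⁰ + t q̇⁰)` for all `t`. -/
theorem stmt6 (N : ℕ) (b : Fin N → ℝ)
    (qd0 qddot0 q0 qdot0 : Fin N → ℝ)
    (hq : b ⬝ᵥ qdot0 ≠ 0) (hqd : b ⬝ᵥ qddot0 ≠ 0)
    (t0 s : ℝ)
    (ht0 : t0 = (b ⬝ᵥ qd0 - b ⬝ᵥ q0) / (b ⬝ᵥ qdot0))
    (hs : s = (b ⬝ᵥ qddot0) / (b ⬝ᵥ qdot0))
    (qdr : ℝ → Fin N → ℝ)
    (hqdr : ∀ t, qdr t = qd0 + ((t - t0) / s) • qddot0) :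
    ∀ t, b ⬝ᵥ qdr t = b ⬝ᵥ (q0 + t • qdot0) := by
  intro t
  simp only [hqdr, ht0, hs, dotProduct_add, dotProduct_smul, smul_eq_mul]
  exact reparam_line_eq hq hqd t
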